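/- Let ρ : ℝ → ℝ be twice continuously differentiable and suppose there exist constants C, κ > 0 such that |ρ(x)| + |ρ'(x)| ≤ C(1+|x|)^κ e^{−|x|} for all x ∈ ℝ, and that ρ solves L₊ρ = x²Q, i.e. −ρ''(x) + ρ(x) − 5Q(x)^4 ρ(x) = x² Q(x) for all x ∈ ℝ. Then ∫_ℝ Q(x) ρ(x) dx = (1/2) ∫_ℝ x² Q(x)² dx. -/

import Mathlib

open Real MeasureTheory

/-- The ground state `Q x = 3^(1/4) (sech (2x))^(1/2)`. -/
noncomputable def Q (x : ℝ) : ℝ :=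
  (3 : ℝ) ^ ((1 : ℝ) / 4) * (1 / Real.cosh (2 * x)) ^ ((1 : ℝ) / 2)

noncomputable def T (x : ℝ) : ℝ := Real.sinh (2 * x) / Real.cosh (2 * x)

noncomputable def QD (x : ℝ) : ℝ := -(T x) * Q x
noncomputable def QDD (x : ℝ) : ℝ := (3 * (T x) ^ 2 - 2) * Q x
noncomputable def W (x : ℝ) : ℝ := Q x / 2 + x * QD x
noncomputable def WD (x : ℝ) : ℝ := (3 / 2) * QD x + x * QDD x

lemma Q_eq (x : ℝ) : Q x = (3 : ℝ) ^ ((1 : ℝ) / 4) * Real.cosh (2 * x) ^ (-(1 / 2) : ℝ) := by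
  rw [Q, one_div (Real.cosh (2 * x)), Real.inv_rpow (Real.cosh_pos _).le,
    ← Real.rpow_neg (Real.cosh_pos _).le]

lemma Q_pos (x : ℝ) : 0 < Q x := by
  rw [Q_eq]
  positivity

lemma hasDerivAt_cosh2 (x : ℝ) :
    HasDerivAt (fun x : ℝ => Real.cosh (2 * x)) (2 * Real.sinh (2 * x)) x := by
  simpa [mul_comm] using (((hasDerivAt_id x).const_mul 2).cosh)

lemma hasDerivAt_sinh2 (x : ℝ) :
    HasDerivAt (fun x : ℝ => Real.sinh (2 * x)) (2 * Real.cosh (2 * x)) x := by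
  simpa [mul_comm] using (((hasDerivAt_id x).const_mul 2).sinh)

lemma T_hasDeriv (x : ℝ) : HasDerivAt T (2 - 2 * T x ^ 2) x := by
  have h := (hasDerivAt_sinh2 x).div (hasDerivAt_cosh2 x) (Real.cosh_pos (2 * x)).ne'
  refine HasDerivAt.congr_deriv h ?_
  have hc := Real.cosh_pos (2 * x)
  have hid := Real.cosh_sq_sub_sinh_sq (2 * x)
  simp only [T]
  field_simp

lemma abs_T_le_one (x : ℝ) : |T x| ≤ 1 := by
  have hc := Real.cosh_pos (2 * x)
  have h : |Real.sinh (2 * x)| ≤ Real.cosh (2 * x) := by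
    rw [Real.abs_sinh, ← Real.cosh_abs]
    rw [Real.sinh_eq, Real.cosh_eq]
    have := Real.exp_pos (-|2 * x|)
    linarith
  rw [T, abs_div, abs_of_pos hc]
  exact (div_le_one hc).mpr h

lemma Q_hasDeriv (x : ℝ) : HasDerivAt Q (QD x) x := by
  have h : HasDerivAt (fun x : ℝ => (3 : ℝ) ^ ((1 : ℝ) / 4) * Real.cosh (2 * x) ^ (-(1 / 2) : ℝ))
      ((3 : ℝ) ^ ((1 : ℝ) / 4) * ((-(1 / 2) : ℝ) * Real.cosh (2 * x) ^ ((-(1 / 2) : ℝ) - 1) *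
        (2 * Real.sinh (2 * x)))) x := by
    exact (((Real.hasDerivAt_rpow_const (p := (-(1 / 2) : ℝ))
      (Or.inl (Real.cosh_pos (2 * x)).ne')).comp x (hasDerivAt_cosh2 x))).const_mul _
  have heq : (fun x : ℝ => (3 : ℝ) ^ ((1 : ℝ) / 4) * Real.cosh (2 * x) ^ (-(1 / 2) : ℝ)) = Q :=
    funext fun x => (Q_eq x).symm
  rw [heq] at h
  convert h using 1
  rw [QD, T, Q_eq]
  have hc := Real.cosh_pos (2 * x)
  have h1 : Real.cosh (2 * x) ^ ((-(1 / 2) : ℝ) - 1)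
      = Real.cosh (2 * x) ^ (-(1 / 2) : ℝ) / Real.cosh (2 * x) := by
    rw [Real.rpow_sub hc, Real.rpow_one]
  rw [h1]
  field_simp

lemma Q_pow4 (x : ℝ) : Q x ^ 4 = 3 * (1 - T x ^ 2) := by
  have hc := Real.cosh_pos (2 * x)
  have hid := Real.cosh_sq_sub_sinh_sq (2 * x)
  have h1 : Q x ^ 4 = 3 * (Real.cosh (2 * x) ^ 2)⁻¹ := by
    rw [Q_eq, mul_pow, ← Real.rpow_natCast ((3:ℝ) ^ ((1:ℝ)/4)) 4,
      ← Real.rpow_natCast (Real.cosh (2*x) ^ (-(1/2):ℝ)) 4,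
      ← Real.rpow_mul (by norm_num : (0:ℝ) ≤ 3), ← Real.rpow_mul hc.le]
    norm_num
  rw [h1, T]
  rw [div_pow]
  field_simp
  linarith [hid]

lemma Q_sq (x : ℝ) : Q x ^ 2 = Real.sqrt 3 * (Real.cosh (2 * x))⁻¹ := by
  have hc := Real.cosh_pos (2 * x)
  rw [Q_eq, mul_pow, ← Real.rpow_natCast ((3:ℝ) ^ ((1:ℝ)/4)) 2,
    ← Real.rpow_natCast (Real.cosh (2*x) ^ (-(1/2):ℝ)) 2,
    ← Real.rpow_mul (by norm_num : (0:ℝ) ≤ 3), ← Real.rpow_mul hc.le,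
    Real.sqrt_eq_rpow]
  norm_num
  rw [show ((-1) : ℝ) = -(1 : ℝ) by norm_num, Real.rpow_neg hc.le, Real.rpow_one]


lemma Q_le (x : ℝ) : Q x ≤ 2 * Real.exp (-|x|) := by
  have hc := Real.cosh_pos (2 * x)
  have hu : (0:ℝ) < Real.exp |x| := Real.exp_pos _
  have hexp : Real.exp |x| * Real.exp |x| ≤ 2 * Real.cosh (2 * x) := by
    rw [← Real.exp_add, Real.cosh_eq]
    rcases abs_cases x with ⟨h, _⟩ | ⟨h, _⟩
    · rw [h, show x + x = 2 * x by ring]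
      have := Real.exp_pos (-(2 * x)); linarith
    · rw [h, show -x + -x = -(2 * x) by ring]
      have := Real.exp_pos (2 * x); linarith
  have h3 : Real.sqrt 3 ≤ 2 := by
    rw [show (2:ℝ) = Real.sqrt 4 by
      rw [show (4:ℝ) = 2 ^ 2 by norm_num, Real.sqrt_sq (by norm_num : (0:ℝ) ≤ 2)]]
    exact Real.sqrt_le_sqrt (by norm_num)
  have hsq : Q x ^ 2 ≤ (2 * Real.exp (-|x|)) ^ 2 := by
    rw [Q_sq, Real.exp_neg]
    have hinvc : (Real.cosh (2*x))⁻¹ ≤ 2 * (Real.exp |x| * Real.exp |x|)⁻¹ := by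
      rw [inv_le_iff_one_le_mul₀ hc]
      have h1 : (Real.exp |x| * Real.exp |x|)⁻¹ * (Real.exp |x| * Real.exp |x|) = 1 :=
        inv_mul_cancel₀ (by positivity)
      calc (1:ℝ) = (Real.exp |x| * Real.exp |x|)⁻¹ * (Real.exp |x| * Real.exp |x|) := h1.symm
      _ ≤ (Real.exp |x| * Real.exp |x|)⁻¹ * (2 * Real.cosh (2*x)) := by
          apply mul_le_mul_of_nonneg_left hexp (by positivity)
      _ = 2 * (Real.exp |x| * Real.exp |x|)⁻¹ * Real.cosh (2*x) := by ring
    have hs3 : (0:ℝ) ≤ Real.sqrt 3 := Real.sqrt_nonneg 3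
    calc Real.sqrt 3 * (Real.cosh (2*x))⁻¹
        ≤ 2 * (2 * (Real.exp |x| * Real.exp |x|)⁻¹) := by
          apply mul_le_mul h3 hinvc (by positivity) (by norm_num)
      _ = (2 * (Real.exp |x|)⁻¹) ^ 2 := by rw [mul_inv]; ring
  have := Real.sqrt_le_sqrt hsq
  rwa [Real.sqrt_sq (Q_pos x).le, Real.sqrt_sq (by positivity)] at this

lemma QD_hasDeriv (x : ℝ) : HasDerivAt QD (QDD x) x := by
  have h : HasDerivAt QD (-(2 - 2 * T x ^ 2) * Q x + -(T x) * QD x) x :=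
    (T_hasDeriv x).neg.mul (Q_hasDeriv x)
  convert h using 1
  rw [QDD, QD]; ring

lemma QDD_hasDeriv (x : ℝ) :
    HasDerivAt QDD ((14 * T x - 15 * T x ^ 3) * Q x) x := by
  have h : HasDerivAt QDD
      (3 * (((2:ℕ):ℝ) * T x ^ (2 - 1) * (2 - 2 * T x ^ 2)) * Q x + (3 * T x ^ 2 - 2) * QD x) x :=
    ((((T_hasDeriv x).pow 2).const_mul 3).sub_const 2).mul (Q_hasDeriv x)
  convert h using 1
  rw [QD]; push_cast; ring

lemma W_hasDeriv (x : ℝ) : HasDerivAt W (WD x) x := by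
  have h : HasDerivAt W (QD x / 2 + (1 * QD x + x * QDD x)) x :=
    ((Q_hasDeriv x).div_const 2).add ((hasDerivAt_id x).mul (QD_hasDeriv x))
  convert h using 1
  rw [WD]; ring

lemma WD_hasDeriv (x : ℝ) :
    HasDerivAt WD (W x - 5 * Q x ^ 4 * W x + 2 * Q x) x := by
  have h : HasDerivAt WD
      ((3 / 2) * QDD x + (1 * QDD x + x * ((14 * T x - 15 * T x ^ 3) * Q x))) x :=
    ((QD_hasDeriv x).const_mul (3/2)).add ((hasDerivAt_id x).mul (QDD_hasDeriv x))
  convert h using 1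
  rw [Q_pow4, W, QD, QDD]; ring

lemma W_abs_le (x : ℝ) : |W x| ≤ (1 + |x|) * Q x := by
  have hT := abs_T_le_one x
  have hQ := Q_pos x
  have habs : |W x| ≤ Q x / 2 + |x| * (|T x| * Q x) := by
    rw [W, QD]
    refine (abs_add_le _ _).trans ?_
    rw [abs_div, abs_of_pos hQ, abs_mul, abs_mul, abs_neg, abs_of_pos hQ]
    norm_num
  nlinarith [abs_nonneg x, abs_nonneg (T x),
    mul_le_mul_of_nonneg_right (mul_le_mul_of_nonneg_left hT (abs_nonneg x)) hQ.le]

lemma WD_abs_le (x : ℝ) : |WD x| ≤ 5 * (1 + |x|) * Q x := by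
  have hT := abs_T_le_one x
  have hQ := Q_pos x
  have habs : |WD x| ≤ (3/2) * (|T x| * Q x) + |x| * (|3 * T x ^ 2 - 2| * Q x) := by
    rw [WD, QD, QDD]
    refine (abs_add_le _ _).trans ?_
    rw [abs_mul, abs_mul, abs_mul, abs_mul, abs_neg, abs_of_pos hQ,
      show |(3/2 : ℝ)| = 3/2 by norm_num]
  have hT2 : T x ^ 2 ≤ 1 := by
    have := pow_le_one₀ (abs_nonneg (T x)) hT (n := 2)
    nlinarith [sq_abs (T x)]
  have h5 : |3 * T x ^ 2 - 2| ≤ 5 := by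
    rw [abs_le]; constructor <;> nlinarith [sq_nonneg (T x)]
  have hTQ : |T x| * Q x ≤ Q x := mul_le_of_le_one_left hQ.le hT
  have h5Q : |x| * (|3 * T x ^ 2 - 2| * Q x) ≤ |x| * (5 * Q x) :=
    mul_le_mul_of_nonneg_left (mul_le_mul_of_nonneg_right h5 hQ.le) (abs_nonneg x)
  nlinarith [abs_nonneg x]

lemma integrable_E : Integrable (fun x : ℝ => Real.exp (-|x|)) := by
  have h1 : IntegrableOn (fun x : ℝ => Real.exp (-|x|)) (Set.Iic 0) := by
    apply (integrableOn_exp_Iic 0).congr_fun ?_ measurableSet_Iic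
    intro x hx
    simp only [Set.mem_Iic] at hx
    simp [abs_of_nonpos hx]
  have h2 : IntegrableOn (fun x : ℝ => Real.exp (-|x|)) (Set.Ioi 0) := by
    apply (exp_neg_integrableOn_Ioi 0 one_pos).congr_fun ?_ measurableSet_Ioi
    intro x hx
    simp only [Set.mem_Ioi] at hx
    simp [abs_of_pos hx]
  have h := h1.union h2
  rw [Set.Iic_union_Ioi] at h
  rwa [integrableOn_univ] at h

lemma continuous_polyE (p : ℝ) :
    Continuous (fun x : ℝ => (1 + |x|) ^ p * Real.exp (-|x|)) := by
  apply Continuous.mul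
  · apply Continuous.rpow_const (continuous_const.add continuous_abs)
    intro x
    left
    exact (by positivity : (1:ℝ) + |x| ≠ 0)
  · exact Real.continuous_exp.comp continuous_abs.neg

lemma tendsto_polyE_atTop (p : ℝ) :
    Filter.Tendsto (fun y : ℝ => (1 + y) ^ p * Real.exp (-y)) Filter.atTop (nhds 0) := by
  have h0 := tendsto_rpow_mul_exp_neg_mul_atTop_nhds_zero p 1 one_pos
  have hadd : Filter.Tendsto (fun y : ℝ => 1 + y) Filter.atTop Filter.atTop :=
    Filter.tendsto_atTop_add_const_left _ 1 Filter.tendsto_id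
  have h1 := h0.comp hadd
  have h2 := h1.const_mul (Real.exp 1)
  rw [mul_zero] at h2
  refine h2.congr fun y => ?_
  show Real.exp 1 * ((1 + y) ^ p * Real.exp (-1 * (1 + y))) = (1 + y) ^ p * Real.exp (-y)
  rw [mul_comm (Real.exp 1), mul_assoc, ← Real.exp_add]
  ring_nf

lemma poly_exp_bound (p : ℝ) :
    ∃ M : ℝ, 0 ≤ M ∧ ∀ x : ℝ, (1 + |x|) ^ p * Real.exp (-|x|) ≤ M := by
  set f : ℝ → ℝ := fun x => (1 + |x|) ^ p * Real.exp (-|x|) with hf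
  have htop : Filter.Tendsto f Filter.atTop (nhds 0) :=
    (tendsto_polyE_atTop p).comp Filter.tendsto_abs_atTop_atTop
  have hbot : Filter.Tendsto f Filter.atBot (nhds 0) :=
    (tendsto_polyE_atTop p).comp Filter.tendsto_abs_atBot_atTop
  obtain ⟨A, hA⟩ := (htop.eventually_le_const one_pos).exists_forall_of_atTop
  obtain ⟨B, hB⟩ := (hbot.eventually_le_const one_pos).exists_forall_of_atBot
  obtain ⟨C, hC⟩ := (isCompact_Icc (a := min B 0) (b := max A 0)).exists_bound_of_continuousOn
    (continuous_polyE p).continuousOn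
  refine ⟨max 1 (max C 0), le_trans zero_le_one (le_max_left _ _), fun x => ?_⟩
  by_cases hxa : max A 0 ≤ x
  · exact le_trans (hA x (le_trans (le_max_left A 0) hxa)) (le_max_left _ _)
  · by_cases hxb : x ≤ min B 0
    · exact le_trans (hB x (le_trans hxb (min_le_left B 0))) (le_max_left _ _)
    · push_neg at hxa hxb
      have hx : x ∈ Set.Icc (min B 0) (max A 0) := ⟨hxb.le, hxa.le⟩
      have := hC x hx
      calc f x ≤ ‖f x‖ := le_abs_self _
      _ ≤ C := this
      _ ≤ max 1 (max C 0) := le_trans (le_max_left C 0) (le_max_right _ _)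

lemma tendsto_E_atTop : Filter.Tendsto (fun x : ℝ => Real.exp (-|x|)) Filter.atTop (nhds 0) :=
  Real.tendsto_exp_neg_atTop_nhds_zero.comp Filter.tendsto_abs_atTop_atTop

lemma tendsto_E_atBot : Filter.Tendsto (fun x : ℝ => Real.exp (-|x|)) Filter.atBot (nhds 0) :=
  Real.tendsto_exp_neg_atTop_nhds_zero.comp Filter.tendsto_abs_atBot_atTop

/-- If `ρ` is `C²` with exponential decay (of `ρ` and `ρ'`) and solves `L₊ρ = x²Q`,
i.e. `−ρ'' + ρ − 5Q⁴ρ = x²Q`, then `∫ Qρ = (1/2)∫ x²Q²`. -/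
theorem rho_scalar_product (ρ : ℝ → ℝ) (hρ : ContDiff ℝ 2 ρ)
    (hdecay : ∃ C κ : ℝ, 0 < C ∧ 0 < κ ∧
      ∀ x : ℝ, |ρ x| + |deriv ρ x| ≤ C * (1 + |x|) ^ κ * Real.exp (-|x|))
    (heq : ∀ x : ℝ,
      -(deriv (deriv ρ) x) + ρ x - 5 * (Q x) ^ 4 * ρ x = x ^ 2 * Q x) :
    (∫ x : ℝ, Q x * ρ x) = (1 / 2) * ∫ x : ℝ, x ^ 2 * (Q x) ^ 2 := by
  obtain ⟨C, κ, hC, hκ, hbound⟩ := hdecay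
  set E : ℝ → ℝ := fun x => Real.exp (-|x|) with hE
  -- regularity of ρ
  have hρc : Continuous ρ := hρ.continuous
  have hρdiff : Differentiable ℝ ρ := hρ.differentiable (by norm_num)
  have hρ1 : ContDiff ℝ 1 (deriv ρ) := by
    have h2 : ContDiff ℝ (1 + 1) ρ := by
      have h12 : (1 + 1 : WithTop ℕ∞) = 2 := by norm_num
      rw [h12]; exact hρ
    exact (contDiff_succ_iff_deriv.mp h2).2.2
  have hρ'c : Continuous (deriv ρ) := hρ1.continuous
  have hρ'diff : Differentiable ℝ (deriv ρ) := hρ1.differentiable one_ne_zero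
  have hρ''c : Continuous (deriv (deriv ρ)) := hρ1.continuous_deriv le_rfl
  -- continuity of Q, W, WD
  have hQc : Continuous Q :=
    continuous_iff_continuousAt.mpr fun x => (Q_hasDeriv x).continuousAt
  have hWc : Continuous W :=
    continuous_iff_continuousAt.mpr fun x => (W_hasDeriv x).continuousAt
  have hWDc : Continuous WD :=
    continuous_iff_continuousAt.mpr fun x => (WD_hasDeriv x).continuousAt
  -- the master bound
  obtain ⟨M, hM0, hMb⟩ := poly_exp_bound (κ + 3)
  have hEpos : ∀ x : ℝ, 0 < E x := fun x => Real.exp_pos _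
  have hbase : ∀ x : ℝ, (1:ℝ) ≤ 1 + |x| := fun x => by
    have := abs_nonneg x; linarith
  have hnat : ∀ (n : ℕ) (x : ℝ), (n : ℝ) ≤ 3 → (1 + |x|) ^ (n : ℕ) ≤ (1 + |x|) ^ (κ + 3 : ℝ) := by
    intro n x hn
    rw [← Real.rpow_natCast (1 + |x|) n]
    exact Real.rpow_le_rpow_of_exponent_le (hbase x) (by linarith)
  have hκmono : ∀ x : ℝ, (1 + |x|) ^ κ ≤ (1 + |x|) ^ (κ + 3 : ℝ) := fun x =>
    Real.rpow_le_rpow_of_exponent_le (hbase x) (by linarith)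
  have hκ1mono : ∀ x : ℝ, (1 + |x|) ^ κ * (1 + |x|) ≤ (1 + |x|) ^ (κ + 3 : ℝ) := by
    intro x
    rw [← Real.rpow_add_one (by positivity : (1 + |x| : ℝ) ≠ 0) κ]
    exact Real.rpow_le_rpow_of_exponent_le (hbase x) (by linarith)
  -- basic pointwise bounds
  have hρb : ∀ x : ℝ, |ρ x| ≤ C * (1 + |x|) ^ κ * E x := fun x => by
    have := hbound x; have := abs_nonneg (deriv ρ x); linarith
  have hρ'b : ∀ x : ℝ, |deriv ρ x| ≤ C * (1 + |x|) ^ κ * E x := fun x => by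
    have := hbound x; have := abs_nonneg (ρ x); linarith
  have hx2 : ∀ x : ℝ, x ^ 2 ≤ (1 + |x|) ^ (2 : ℕ) := fun x => by
    nlinarith [abs_nonneg x, sq_abs x]
  have hEsq : ∀ x : ℝ, E x * E x ≤ E x := fun x => by
    have h1 : E x ≤ 1 := Real.exp_le_one_iff.mpr (by simp [hE, abs_nonneg]) 
    nlinarith [hEpos x]
  -- bound on f1 = Q * ρ
  have bf1 : ∀ x : ℝ, |Q x * ρ x| ≤ (2 * C * M) * E x := by
    intro x
    rw [abs_mul, abs_of_pos (Q_pos x)]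
    have h1 : Q x * |ρ x| ≤ (2 * E x) * (C * (1 + |x|) ^ κ * E x) :=
      mul_le_mul (Q_le x) (hρb x) (abs_nonneg _) (by positivity)
    have h2 : (1 + |x|) ^ κ * E x ≤ M := le_trans
      (mul_le_mul_of_nonneg_right (hκmono x) (hEpos x).le) (hMb x)
    nlinarith [hEpos x, Real.rpow_nonneg (by positivity : (0:ℝ) ≤ 1 + |x|) κ,
      mul_le_mul_of_nonneg_left h2 (by positivity : (0:ℝ) ≤ 2 * C * E x)]
  -- bound on f2 = x^2 Q^2
  have bf2 : ∀ x : ℝ, |x ^ 2 * Q x ^ 2| ≤ (4 * M) * E x := by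
    intro x
    rw [abs_mul, abs_of_nonneg (sq_nonneg x), abs_of_nonneg (sq_nonneg (Q x))]
    have hq : Q x ^ 2 ≤ (2 * E x) ^ 2 := by
      nlinarith [Q_le x, Q_pos x, hEpos x]
    have h1 : x ^ 2 * Q x ^ 2 ≤ (1 + |x|) ^ (2:ℕ) * (4 * (E x * E x)) := by
      nlinarith [sq_nonneg x, sq_nonneg (Q x), hx2 x, hEpos x,
        pow_nonneg (by positivity : (0:ℝ) ≤ 1 + |x|) 2]
    have h2 : (1 + |x|) ^ (2:ℕ) * E x ≤ M := le_trans
      (mul_le_mul_of_nonneg_right (hnat 2 x (by norm_num)) (hEpos x).le) (hMb x)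
    nlinarith [hEpos x, pow_nonneg (by positivity : (0:ℝ) ≤ 1 + |x|) 2,
      mul_le_mul_of_nonneg_left h2 (by positivity : (0:ℝ) ≤ 4 * E x), hEsq x]
  -- bound on f3 = x^2 Q W
  have bf3 : ∀ x : ℝ, |x ^ 2 * Q x * W x| ≤ (4 * M) * E x := by
    intro x
    rw [abs_mul, abs_mul, abs_of_nonneg (sq_nonneg x), abs_of_pos (Q_pos x)]
    have h1 : x ^ 2 * Q x * |W x| ≤ (1 + |x|) ^ (2:ℕ) * (2 * E x) * ((1 + |x|) * (2 * E x)) := by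
      have hW := W_abs_le x
      have hWQ : |W x| ≤ (1 + |x|) * (2 * E x) := le_trans hW
        (mul_le_mul_of_nonneg_left (Q_le x) (by positivity))
      have hxQ : x ^ 2 * Q x ≤ (1 + |x|) ^ (2:ℕ) * (2 * E x) :=
        mul_le_mul (hx2 x) (Q_le x) (Q_pos x).le (by positivity)
      exact mul_le_mul hxQ hWQ (abs_nonneg _) (by positivity)
    have h2 : (1 + |x|) ^ (3:ℕ) * E x ≤ M := le_trans
      (mul_le_mul_of_nonneg_right (hnat 3 x (by norm_num)) (hEpos x).le) (hMb x)
    have h3 : (1 + |x|) ^ (2:ℕ) * (2 * E x) * ((1 + |x|) * (2 * E x))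
        = 4 * ((1 + |x|) ^ (3:ℕ) * E x) * E x := by ring
    rw [h3] at h1
    nlinarith [hEpos x, hEsq x, pow_nonneg (by positivity : (0:ℝ) ≤ 1 + |x|) 3,
      mul_le_mul_of_nonneg_left h2 (by positivity : (0:ℝ) ≤ 4 * E x)]
  -- g and F
  set g : ℝ → ℝ := fun x => deriv ρ x * W x - ρ x * WD x with hg
  set F : ℝ → ℝ := fun x => x ^ 3 * Q x ^ 2 / 2 with hF
  have bg : ∀ x : ℝ, |g x| ≤ (12 * C * M) * E x := by
    intro x
    have h1 : |g x| ≤ |deriv ρ x| * |W x| + |ρ x| * |WD x| := by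
      rw [hg]
      refine (abs_sub _ _).trans ?_
      rw [abs_mul, abs_mul]
    have hWb : |W x| ≤ (1 + |x|) * (2 * E x) := le_trans (W_abs_le x)
      (mul_le_mul_of_nonneg_left (Q_le x) (by positivity))
    have hWDb : |WD x| ≤ 5 * ((1 + |x|) * (2 * E x)) := by
      calc |WD x| ≤ 5 * (1 + |x|) * Q x := WD_abs_le x
        _ ≤ 5 * (1 + |x|) * (2 * E x) := mul_le_mul_of_nonneg_left (Q_le x) (by positivity)
        _ = 5 * ((1 + |x|) * (2 * E x)) := by ring
    have hP : (1 + |x|) ^ κ * (1 + |x|) * E x ≤ M := le_trans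
      (mul_le_mul_of_nonneg_right (hκ1mono x) (hEpos x).le) (hMb x)
    have t1 : |deriv ρ x| * |W x| ≤ (C * (1 + |x|) ^ κ * E x) * ((1 + |x|) * (2 * E x)) :=
      mul_le_mul (hρ'b x) hWb (abs_nonneg _) (by positivity)
    have t2 : |ρ x| * |WD x| ≤ (C * (1 + |x|) ^ κ * E x) * (5 * ((1 + |x|) * (2 * E x))) :=
      mul_le_mul (hρb x) hWDb (abs_nonneg _) (by positivity)
    nlinarith [hEpos x, mul_le_mul_of_nonneg_left hP (by positivity : (0:ℝ) ≤ 2 * C * E x),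
      mul_le_mul_of_nonneg_left hP (by positivity : (0:ℝ) ≤ 10 * C * E x)]
  have bF : ∀ x : ℝ, |F x| ≤ (2 * M) * E x := by
    intro x
    have h0 : |F x| = |x| ^ 3 * Q x ^ 2 / 2 := by
      rw [hF, abs_div, abs_mul, abs_pow, abs_pow, abs_of_pos (Q_pos x)]
      norm_num
    rw [h0]
    have hx3 : |x| ^ 3 ≤ (1 + |x|) ^ (3:ℕ) := by
      have := abs_nonneg x
      nlinarith [abs_nonneg x]
    have hq : Q x ^ 2 ≤ 4 * (E x * E x) := by
      nlinarith [Q_le x, Q_pos x, hEpos x]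
    have h2 : (1 + |x|) ^ (3:ℕ) * E x ≤ M := le_trans
      (mul_le_mul_of_nonneg_right (hnat 3 x (by norm_num)) (hEpos x).le) (hMb x)
    have h1 : |x| ^ 3 * Q x ^ 2 ≤ (1 + |x|) ^ (3:ℕ) * (4 * (E x * E x)) :=
      mul_le_mul hx3 hq (sq_nonneg _) (by positivity)
    nlinarith [hEpos x, hEsq x,
      mul_le_mul_of_nonneg_left h2 (by positivity : (0:ℝ) ≤ 2 * E x)]
  -- limits at infinity
  have hEtop : Filter.Tendsto (fun x : ℝ => (12 * C * M) * E x) Filter.atTop (nhds 0) := by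
    have := tendsto_E_atTop.const_mul (12 * C * M); rwa [mul_zero] at this
  have hEbot : Filter.Tendsto (fun x : ℝ => (12 * C * M) * E x) Filter.atBot (nhds 0) := by
    have := tendsto_E_atBot.const_mul (12 * C * M); rwa [mul_zero] at this
  have gtop : Filter.Tendsto g Filter.atTop (nhds 0) :=
    squeeze_zero_norm (fun x => by rw [Real.norm_eq_abs]; exact bg x) hEtop
  have gbot : Filter.Tendsto g Filter.atBot (nhds 0) :=
    squeeze_zero_norm (fun x => by rw [Real.norm_eq_abs]; exact bg x) hEbot
  have hFtop' : Filter.Tendsto (fun x : ℝ => (2 * M) * E x) Filter.atTop (nhds 0) := by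
    have := tendsto_E_atTop.const_mul (2 * M); rwa [mul_zero] at this
  have hFbot' : Filter.Tendsto (fun x : ℝ => (2 * M) * E x) Filter.atBot (nhds 0) := by
    have := tendsto_E_atBot.const_mul (2 * M); rwa [mul_zero] at this
  have Ftop : Filter.Tendsto F Filter.atTop (nhds 0) :=
    squeeze_zero_norm (fun x => by rw [Real.norm_eq_abs]; exact bF x) hFtop'
  have Fbot : Filter.Tendsto F Filter.atBot (nhds 0) :=
    squeeze_zero_norm (fun x => by rw [Real.norm_eq_abs]; exact bF x) hFbot'
  -- derivatives
  have hgd : ∀ x : ℝ, HasDerivAt g (-(x ^ 2 * Q x * W x) - 2 * (Q x * ρ x)) x := by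
    intro x
    have h1 : HasDerivAt (deriv ρ) (deriv (deriv ρ) x) x := (hρ'diff x).hasDerivAt
    have h2 : HasDerivAt ρ (deriv ρ x) x := (hρdiff x).hasDerivAt
    have h := (h1.mul (W_hasDeriv x)).sub (h2.mul (WD_hasDeriv x))
    refine HasDerivAt.congr_deriv h ?_
    have hx : deriv (deriv ρ) x = ρ x - 5 * Q x ^ 4 * ρ x - x ^ 2 * Q x := by
      linarith [heq x]
    rw [hx]
    ring
  have hFd : ∀ x : ℝ, HasDerivAt F (x ^ 2 * Q x * W x + x ^ 2 * Q x ^ 2) x := by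
    intro x
    have h := ((hasDerivAt_pow 3 x).mul ((Q_hasDeriv x).pow 2)).div_const 2
    refine HasDerivAt.congr_deriv h ?_
    simp only [W, QD, Pi.pow_apply]
    push_cast
    ring
  -- integrability
  have int_dom : ∀ (f : ℝ → ℝ) (K : ℝ), Continuous f → (∀ x, |f x| ≤ K * E x) →
      Integrable f := by
    intro f K hc hb
    apply (integrable_E.const_mul K).mono' hc.aestronglyMeasurable
    filter_upwards with x
    rw [Real.norm_eq_abs]
    exact hb x
  have int_f1 : Integrable (fun x : ℝ => Q x * ρ x) := int_dom _ _ (hQc.mul hρc) bf1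
  have int_f2 : Integrable (fun x : ℝ => x ^ 2 * Q x ^ 2) :=
    int_dom _ _ ((continuous_pow 2).mul (hQc.pow 2)) bf2
  have int_f3 : Integrable (fun x : ℝ => x ^ 2 * Q x * W x) :=
    int_dom _ _ (((continuous_pow 2).mul hQc).mul hWc) bf3
  have hneg : Integrable (fun x : ℝ => -(x ^ 2 * Q x * W x)) := int_f3.neg
  have h2f1 : Integrable (fun x : ℝ => 2 * (Q x * ρ x)) := int_f1.const_mul 2
  have int_gd : Integrable (fun x : ℝ => -(x ^ 2 * Q x * W x) - 2 * (Q x * ρ x)) :=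
    hneg.sub h2f1
  have int_Fd : Integrable (fun x : ℝ => x ^ 2 * Q x * W x + x ^ 2 * Q x ^ 2) :=
    int_f3.add int_f2
  -- FTC on the whole line for g
  have hg_int : (∫ x : ℝ, (-(x ^ 2 * Q x * W x) - 2 * (Q x * ρ x))) = 0 := by
    have hIoi := MeasureTheory.integral_Ioi_of_hasDerivAt_of_tendsto' (a := 0)
      (fun x _ => hgd x) int_gd.integrableOn gtop
    have hIic := MeasureTheory.integral_Iic_of_hasDerivAt_of_tendsto' (a := 0)
      (fun x _ => hgd x) int_gd.integrableOn gbot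
    have hsplit := intervalIntegral.integral_Iic_add_Ioi (b := 0)
      int_gd.integrableOn int_gd.integrableOn
    rw [← hsplit, hIoi, hIic]
    ring
  have hF_int : (∫ x : ℝ, (x ^ 2 * Q x * W x + x ^ 2 * Q x ^ 2)) = 0 := by
    have hIoi := MeasureTheory.integral_Ioi_of_hasDerivAt_of_tendsto' (a := 0)
      (fun x _ => hFd x) int_Fd.integrableOn Ftop
    have hIic := MeasureTheory.integral_Iic_of_hasDerivAt_of_tendsto' (a := 0)
      (fun x _ => hFd x) int_Fd.integrableOn Fbot
    have hsplit := intervalIntegral.integral_Iic_add_Ioi (b := 0)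
      int_Fd.integrableOn int_Fd.integrableOn
    rw [← hsplit, hIoi, hIic]
    ring
  -- linear algebra with the integrals
  have e1 : (∫ x : ℝ, (-(x ^ 2 * Q x * W x) - 2 * (Q x * ρ x)))
      = -(∫ x : ℝ, x ^ 2 * Q x * W x) - 2 * ∫ x : ℝ, Q x * ρ x := by
    rw [MeasureTheory.integral_sub hneg h2f1,
      MeasureTheory.integral_neg, MeasureTheory.integral_const_mul]
  have e2 : (∫ x : ℝ, (x ^ 2 * Q x * W x + x ^ 2 * Q x ^ 2))
      = (∫ x : ℝ, x ^ 2 * Q x * W x) + ∫ x : ℝ, x ^ 2 * Q x ^ 2 :=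
    MeasureTheory.integral_add int_f3 int_f2
  rw [e1] at hg_int
  rw [e2] at hF_int
  linarith
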